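/- arXiv:math/0602258 — 3 statements merged into one kernel-verified Lean document; each statement's English description precedes it below -/
import Mathlib

section
/- If c = (c_1,c_2,c_3,c_4,c_5) ∈ ℤ⁵ is cohomology-free and c_5 ≥ 1, then c_1 ≥ c_5 − 1, c_2 ≥ 3c_5 − 2, c_3 ≥ 5c_5 − 3, and c_4 ≥ 2c_5 − 1. -/
/-- The primitive ray generators `l₁,…,l₇` of the fan, in counterclockwise order,
acting on `ℤ²` by the dot product. -/
def rayForm : Fin 7 → ℤ × ℤ :=
  ![(1, -1), (2, -1), (3, -1), (1, 0), (0, 1), (-1, 2), (0, -1)]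

/-- Extend `c ∈ ℤ⁵` to seven coefficients by `c₆ = c₇ = 0`. -/
def cExt (c : Fin 5 → ℤ) : Fin 7 → ℤ :=
  fun i => if h : (i : ℕ) < 5 then c ⟨i, h⟩ else 0

/-- `N_c(m) = {i : l_i(m) + c_i < 0}`. -/
def Nset (c : Fin 5 → ℤ) (m : ℤ × ℤ) : Finset (Fin 7) :=
  Finset.univ.filter fun i =>
    (rayForm i).1 * m.1 + (rayForm i).2 * m.2 + cExt c i < 0

open Fin.NatCast in
/-- A subset of the cyclic index set `Fin 7` is a circular interval if it is empty
or of the form `{a, a+1, …, b}` with indices taken modulo 7. -/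
def IsCircularInterval (S : Finset (Fin 7)) : Prop :=
  S = ∅ ∨ ∃ (a : Fin 7) (n : ℕ),
    S = (Finset.range (n + 1)).image fun j : ℕ => a + (j : Fin 7)

/-- `c ∈ ℤ⁵` is cohomology-free if for every `m ∈ ℤ²` and both `ε ∈ {1, -1}`,
the set `N_{εc}(m)` is a circular interval different from the whole index set. -/
def CohomologyFree (c : Fin 5 → ℤ) : Prop :=
  ∀ m : ℤ × ℤ, ∀ ε : ℤ, ε = 1 ∨ ε = -1 →
    IsCircularInterval (Nset (ε • c) m) ∧ Nset (ε • c) m ≠ Finset.univ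


/-!
Test the interval condition for `ε = 1` at `m = (1 - 2c₅, -c₅)`. There `l₆(m) = -1 < 0`,
`l₅(m) + c₅ = 0` and `l₇(m) = c₅ > 0`, so `6` (the index `5 : Fin 7`) lies in `N_c(m)` while both of its cyclic
neighbours do not. A circular interval with an isolated point is that singleton, hence
`l_i(m) + c_i ≥ 0` for `i = 1, …, 4`, which are exactly the four inequalities.
-/

open Fin.NatCast in
theorem IsCircularInterval.eq_singleton {S : Finset (Fin 7)} (hS : IsCircularInterval S)
    {i : Fin 7} (hi : i ∈ S) (hpred : i - 1 ∉ S) (hsucc : i + 1 ∉ S) : S = {i} := by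
  rcases hS with rfl | ⟨a, n, rfl⟩
  · simp at hi
  simp only [Finset.mem_image, Finset.mem_range, not_exists, not_and] at hi hpred hsucc
  obtain ⟨j, hj, rfl⟩ := hi
  have hjn : j = n := by
    by_contra hne
    exact hsucc (j + 1) (by omega) (by push_cast; abel)
  have hj0 : j = 0 := by
    obtain _ | k := j
    · rfl
    · exact (hpred k (by omega) (by push_cast; abel)).elim
  subst hjn hj0
  simp

theorem mem_Nset {c : Fin 5 → ℤ} {m : ℤ × ℤ} {i : Fin 7} :
    i ∈ Nset c m ↔ (rayForm i).1 * m.1 + (rayForm i).2 * m.2 + cExt c i < 0 := by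
  simp [Nset]

/-- If `c` is cohomology-free and `c₅ ≥ 1`, then `c₁ ≥ c₅ - 1`, `c₂ ≥ 3c₅ - 2`,
`c₃ ≥ 5c₅ - 3` and `c₄ ≥ 2c₅ - 1`. -/
theorem first_general_conditions (c : Fin 5 → ℤ) (h : CohomologyFree c)
    (h5 : 1 ≤ c 4) :
    c 0 ≥ c 4 - 1 ∧ c 1 ≥ 3 * c 4 - 2 ∧ c 2 ≥ 5 * c 4 - 3 ∧
      c 3 ≥ 2 * c 4 - 1 := by
  set m : ℤ × ℤ := (1 - 2 * c 4, -c 4)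
  have hinterval : IsCircularInterval (Nset c m) := by
    simpa using (h m 1 (Or.inl rfl)).1
  have hsingleton : Nset c m = {5} := by
    refine hinterval.eq_singleton ?_ ?_ ?_ <;> simp [mem_Nset, rayForm, cExt, m]
    omega
  have hnonneg (i : Fin 7) (hi : i ≠ 5) :
      0 ≤ (rayForm i).1 * m.1 + (rayForm i).2 * m.2 + cExt c i := by
    by_contra hlt
    exact hi (by simpa [hsingleton] using mem_Nset.2 (not_le.1 hlt))
  have h0 := hnonneg 0 (by decide)
  have h1 := hnonneg 1 (by decide)
  have h2 := hnonneg 2 (by decide)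
  have h3 := hnonneg 3 (by decide)
  simp [rayForm, cExt, m] at h0 h1 h2 h3
  omega
end

section
/- A vector c = (c_1,c_2,c_3,c_4,c_5) ∈ ℤ⁵ with c_5 = 2 and c_4 = 3 is cohomology-free if and only if c is one of the seven tuples (2,4,7,3,2), (2,5,7,3,2), (2,5,8,3,2), (3,5,7,3,2), (3,5,8,3,2), (3,6,8,3,2), (3,6,9,3,2). -/
/-!
A subset `S` of the cyclic index set is a circular interval if and only if it has at most one
exit, an index `i ∈ S` with `i + 1 ∉ S`; on `ℤ/7` this is a finite check. Each set `N_{εc}(m)`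
is cut out by seven linear inequalities in `m`, so the exit condition and properness are
statements of linear integer arithmetic. They hold for every `m` as soon as `c` lies in the
polytope `2 ≤ c 0, c 1 - c 0, c 2 - c 1 ≤ 3`, `7 ≤ c 2`. Conversely, twelve explicit pairs
`(m, ε)` exhibit two exits unless `c` lies in that polytope.
-/

open Finset

open Fin.NatCast in
def circularArc (a : Fin 7) (n : ℕ) : Finset (Fin 7) :=
  (range (n + 1)).image fun j : ℕ => a + (j : Fin 7)

theorem circularArc_eq_univ (a : Fin 7) {n : ℕ} (hn : 6 ≤ n) : circularArc a n = univ :=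
  eq_univ_of_forall fun x => mem_image.2
    ⟨((x - a : Fin 7) : ℕ), mem_range.2 (by omega),
      by rw [Fin.cast_val_eq_self, add_sub_cancel]⟩

theorem isCircularInterval_iff_exists_lt (S : Finset (Fin 7)) :
    IsCircularInterval S ↔ S = ∅ ∨ ∃ a : Fin 7, ∃ n : Fin 7, S = circularArc a n := by
  refine or_congr_right ⟨fun ⟨a, n, hS⟩ => ?_, fun ⟨a, n, hS⟩ => ⟨a, n, hS⟩⟩
  rcases lt_or_ge n 7 with hn | hn
  · exact ⟨a, ⟨n, hn⟩, hS⟩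
  · exact ⟨a, 6, hS.trans <| (circularArc_eq_univ a (n := n) (by omega)).trans
      (circularArc_eq_univ a le_rfl).symm⟩

set_option maxRecDepth 10000 in
theorem isCircularInterval_iff_exit_unique (S : Finset (Fin 7)) :
    IsCircularInterval S ↔ ∀ i j, i ∈ S → i + 1 ∉ S → j ∈ S → j + 1 ∉ S → i = j := by
  rw [isCircularInterval_iff_exists_lt]
  revert S
  decide

theorem mem_Nset_iff {c : Fin 5 → ℤ} {m : ℤ × ℤ} {i : Fin 7} :
    i ∈ Nset c m ↔ ![m.1 - m.2 + c 0, 2 * m.1 - m.2 + c 1, 3 * m.1 - m.2 + c 2, m.1 + c 3,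
      m.2 + c 4, 2 * m.2 - m.1, -m.2] i < 0 := by
  simp only [Nset, mem_filter, mem_univ, true_and]
  fin_cases i <;>
    simp only [rayForm, cExt, Matrix.cons_val, Fin.reduceFinMk, Fin.zero_eta, Fin.mk_one,
      Fin.isValue, Nat.reduceLT, Nat.ofNat_pos, Nat.one_lt_ofNat, ↓reduceDIte] <;>
    omega

/-- The integer points of this polytope are exactly the seven vectors of the classification:
the box `2 ≤ c 0, c 1 - c 0, c 2 - c 1 ≤ 3` without its corner `(2, 4, 6)`. -/
def StepBounded (c : Fin 5 → ℤ) : Prop :=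
  c 0 ∈ Set.Icc 2 3 ∧ c 1 - c 0 ∈ Set.Icc 2 3 ∧ c 2 - c 1 ∈ Set.Icc 2 3 ∧ 7 ≤ c 2

section

variable {c : Fin 5 → ℤ}

theorem CohomologyFree.not_two_exits (hc : CohomologyFree c) (m : ℤ × ℤ)
    {ε : ℤ} (hε : ε = 1 ∨ ε = -1) {i j : Fin 7} (hij : i ≠ j) :
    ¬(i ∈ Nset (ε • c) m ∧ i + 1 ∉ Nset (ε • c) m ∧
      j ∈ Nset (ε • c) m ∧ j + 1 ∉ Nset (ε • c) m) :=
  fun ⟨hi, hi', hj, hj'⟩ =>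
    hij <| (isCircularInterval_iff_exit_unique _).1 (hc m ε hε).1 i j hi hi' hj hj'

theorem CohomologyFree.stepBounded (hc : CohomologyFree c) (h3 : c 3 = 3) (h4 : c 4 = 2) :
    StepBounded c := by
  have pos (m : ℤ × ℤ) (i j : Fin 7) (hij : i ≠ j) := hc.not_two_exits m (.inl rfl) hij
  have neg (m : ℤ × ℤ) (i j : Fin 7) (hij : i ≠ j) := hc.not_two_exits m (.inr rfl) hij
  have := pos (-3, -2) 2 5 (by decide)
  have := neg (3, 0) 2 5 (by decide)
  have := pos (-3, -2) 1 5 (by decide)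
  have := neg (3, 0) 1 5 (by decide)
  have := neg (2, 1) 4 6 (by decide)
  have := pos (-3, 1) 2 6 (by decide)
  have := neg (3, 2) 0 2 (by decide)
  have := pos (-3, 0) 0 2 (by decide)
  have := neg (3, 1) 2 6 (by decide)
  have := pos (-2, 1) 1 6 (by decide)
  have := pos (-2, 2) 0 2 (by decide)
  have := neg (3, 1) 0 2 (by decide)
  clear pos neg
  simp only [mem_Nset_iff, Matrix.cons_val, Fin.reduceAdd, one_smul, neg_smul, Pi.neg_apply]
    at *
  simp only [StepBounded, Set.mem_Icc]
  omega

theorem cohomologyFree_of_stepBounded (h3 : c 3 = 3) (h4 : c 4 = 2) (hc : StepBounded c) :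
    CohomologyFree c := by
  simp only [StepBounded, Set.mem_Icc] at hc
  rintro ⟨x, y⟩ ε hε
  rw [isCircularInterval_iff_exit_unique, Ne, eq_univ_iff_forall]
  refine ⟨fun i j => ?_, fun h => ?_⟩
  · rcases hε with rfl | rfl <;>
      simp only [one_smul, neg_smul, mem_Nset_iff, Pi.neg_apply, h3, h4] <;>
      fin_cases i <;> fin_cases j <;>
      simp only [Fin.reduceFinMk, Fin.reduceAdd, Matrix.cons_val, Fin.reduceEq, implies_true] <;>
      omega
  · have h₃ := mem_Nset_iff.1 (h 3)
    have h₄ := mem_Nset_iff.1 (h 4)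
    have h₅ := mem_Nset_iff.1 (h 5)
    have h₆ := mem_Nset_iff.1 (h 6)
    rcases hε with rfl | rfl <;>
      simp only [Matrix.cons_val, one_smul, neg_smul, Pi.neg_apply, h3, h4] at h₃ h₄ h₅ h₆ <;>
      omega

theorem stepBounded_iff (h3 : c 3 = 3) (h4 : c 4 = 2) :
    StepBounded c ↔
      c = ![2,4,7,3,2] ∨ c = ![2,5,7,3,2] ∨ c = ![2,5,8,3,2] ∨
      c = ![3,5,7,3,2] ∨ c = ![3,5,8,3,2] ∨ c = ![3,6,8,3,2] ∨
      c = ![3,6,9,3,2] := by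
  obtain ⟨a, b, d, rfl⟩ : ∃ a b d : ℤ, c = ![a, b, d, 3, 2] :=
    ⟨c 0, c 1, c 2, by ext i; fin_cases i <;> simp [h3, h4]⟩
  simp only [StepBounded, Set.mem_Icc, Matrix.cons_val, Matrix.vecCons_inj, and_true]
  omega

end

/-- Classification of cohomology-free vectors with `c₅ = 2` and `c₄ = 3`. -/
theorem classification_c5_two_c4_three (c : Fin 5 → ℤ) (h5 : c 4 = 2)
    (h4 : c 3 = 3) :
    CohomologyFree c ↔
      c = ![2,4,7,3,2] ∨ c = ![2,5,7,3,2] ∨ c = ![2,5,8,3,2] ∨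
      c = ![3,5,7,3,2] ∨ c = ![3,5,8,3,2] ∨ c = ![3,6,8,3,2] ∨
      c = ![3,6,9,3,2] := by
  rw [← stepBounded_iff h4 h5]
  exact ⟨fun hc => hc.stepBounded h4 h5, cohomologyFree_of_stepBounded h4 h5⟩
end

section
/- If c = (c_1,c_2,c_3,c_4,c_5) ∈ ℤ⁵ is cohomology-free with c_5 = 2 and c_4 = 4, then 2 ≤ c_1 ≤ 4, 5 ≤ c_2 ≤ 8, 9 ≤ c_3 ≤ 12, and moreover c_1 = 2 or c_2 = 5. -/
/-! A circular interval containing `i` but missing `x` and `y` misses every index met after `x`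
and before `y` when walking around the cycle from `i`. Each bound is this observation for
`N_{±c}(m)` at a test point `m` chosen so that the required members and non-members are forced
by `c₄` and `c₅` alone; the disjunction holds because otherwise `N_{-c}(3, 1)` would be the whole
index set. Indices are `Fin`-based: `c i` is `c_{i+1}`. -/

open Fin.NatCast in
theorem mem_image_range_add_iff {a k : Fin 7} {n : ℕ} :
    k ∈ (Finset.range (n + 1)).image (fun j : ℕ => a + (j : Fin 7)) ↔ (k - a).val ≤ n := by
  constructor
  · intro h
    obtain ⟨j, hj, rfl⟩ := Finset.mem_image.mp h
    rw [add_sub_cancel_left, Fin.val_natCast]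
    exact (Nat.mod_le _ _).trans (Finset.mem_range_succ_iff.mp hj)
  · intro h
    exact Finset.mem_image.mpr ⟨(k - a).val, Finset.mem_range_succ_iff.mpr h, by simp⟩

theorem IsCircularInterval.notMem_of_between {S : Finset (Fin 7)} (hS : IsCircularInterval S)
    {i x j y : Fin 7} (hx : (x - i).val < (j - i).val) (hy : (j - i).val < (y - i).val)
    (hi : i ∈ S) (hxS : x ∉ S) (hyS : y ∉ S) : j ∉ S := by
  rcases hS with rfl | ⟨a, n, rfl⟩
  · exact Finset.notMem_empty j
  simp only [mem_image_range_add_iff, not_le, Fin.sub_def] at hi hxS hyS hx hy ⊢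
  omega

namespace CohomologyFree

variable {c : Fin 5 → ℤ}

theorem le_of_pos (hc : CohomologyFree c) (h4 : 0 < c 4) :
    c 0 ≤ c 3 ∧ c 1 ≤ 2 * c 3 ∧ c 2 ≤ 3 * c 3 := by
  have hS := (hc (c 3, 0) (-1) (Or.inr rfl)).1
  have key : ∀ j ∈ ({0, 1, 2} : Finset (Fin 7)), j ∉ Nset ((-1 : ℤ) • c) (c 3, 0) := by
    intro j hj
    fin_cases hj <;>
      exact hS.notMem_of_between (i := 4) (x := 6) (y := 3) (by decide) (by decide)
        (by simpa [Nset, rayForm, cExt]) (by simp [Nset, rayForm, cExt])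
        (by simp [Nset, rayForm, cExt])
  simpa [Nset, rayForm, cExt] using key

theorem ge_of_neg_one_le (hc : CohomologyFree c) (h4 : -1 ≤ c 4) :
    2 * c 3 - c 4 - 1 ≤ c 1 ∧ 3 * c 3 - c 4 - 1 ≤ c 2 := by
  have hS := (hc (-c 3, -(c 4 + 1)) 1 (Or.inl rfl)).1
  have key : ∀ j ∈ ({1, 2} : Finset (Fin 7)), j ∉ Nset ((1 : ℤ) • c) (-c 3, -(c 4 + 1)) := by
    intro j hj
    fin_cases hj <;>
      exact hS.notMem_of_between (i := 4) (x := 6) (y := 3) (by decide) (by decide)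
        (by simp [Nset, rayForm, cExt]) (by simp [Nset, rayForm, cExt]; omega)
        (by simp [Nset, rayForm, cExt])
  simp [Nset, rayForm, cExt] at key
  omega

theorem lt_of_two_mul_lt (hc : CohomologyFree c) {b : ℤ} (hb : 0 < b) (hbc : 2 * b < c 3) :
    b < c 0 := by
  have hS := (hc (2 * b, b) (-1) (Or.inr rfl)).1
  by_contra! h0
  exact hS.notMem_of_between (i := 3) (x := 5) (j := 6) (y := 0) (by decide) (by decide)
    (by simpa [Nset, rayForm, cExt]) (by simp [Nset, rayForm, cExt])
    (by simp [Nset, rayForm, cExt]; omega) (by simpa [Nset, rayForm, cExt])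

theorem not_all_large (hc : CohomologyFree c) :
    ¬(3 ≤ c 0 ∧ 6 ≤ c 1 ∧ 9 ≤ c 2 ∧ 4 ≤ c 3 ∧ 2 ≤ c 4) := by
  intro hlarge
  apply (hc (3, 1) (-1) (Or.inr rfl)).2
  rw [Finset.eq_univ_iff_forall]
  intro i
  fin_cases i <;> simp [Nset, rayForm, cExt] <;> omega

end CohomologyFree

/-- If `c` is cohomology-free with `c₅ = 2` and `c₄ = 4`, then `2 ≤ c₁ ≤ 4`,
`5 ≤ c₂ ≤ 8`, `9 ≤ c₃ ≤ 12`, and `c₁ = 2` or `c₂ = 5`. -/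
theorem bounds_c5_two_c4_four (c : Fin 5 → ℤ) (h : CohomologyFree c)
    (h5 : c 4 = 2) (h4 : c 3 = 4) :
    (2 ≤ c 0 ∧ c 0 ≤ 4) ∧ (5 ≤ c 1 ∧ c 1 ≤ 8) ∧ (9 ≤ c 2 ∧ c 2 ≤ 12) ∧
      (c 0 = 2 ∨ c 1 = 5) := by
  have hupper := h.le_of_pos (by omega)
  have hlower := h.ge_of_neg_one_le (by omega)
  have hc0 := h.lt_of_two_mul_lt (b := 1) one_pos (by omega)
  have hsmall := h.not_all_large
  omega
end
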